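/- arXiv:2507.11098 — 4 statements merged into one kernel-verified Lean document; each statement's English description precedes it below -/
import Mathlib

section
/- Let U be a finite set partitioned as U = U_L ⊎ U_H (i.e., U_L ∩ U_H = ∅ and U_L ∪ U_H = U), and let A and B be finite families of subsets of U. Define S_A := { (a ∩ U_L) ∪ x : a ∈ A, x ⊆ U_H, x ∩ a = ∅ } and S_B := { y ∪ (b ∩ U_H) : b ∈ B, y ⊆ U_L, y ∩ b = ∅ }. Then S_A ∩ S_B ≠ ∅ if and only if there exist a ∈ A and b ∈ B with a ∩ b = ∅. -/
/-! Split an element `t ∈ a ∩ b` according to whether it lies in `U_L` or `U_H`. If `t ∈ U_L`,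
then `t ∈ a ∩ U_L ⊆ s = y ∪ (b ∩ U_H)`, and `t ∉ U_H` forces `t ∈ y`, contradicting `y ∩ b = ∅`;
the case `t ∈ U_H` is symmetric. Conversely, an orthogonal pair `a, b` gives the common element
`(a ∩ U_L) ∪ (b ∩ U_H)`. -/

section DistribLattice

variable {β : Type*} [DistribLattice β] [OrderBot β]

theorem sup_inf_inf_le_of_disjoint {y z L H : β} (hLH : Disjoint L H) :
    (y ⊔ z ⊓ H) ⊓ L ≤ y := by
  rw [inf_sup_right]
  exact sup_le inf_le_left
    ((inf_le_inf_right L inf_le_right).trans (hLH.symm.le_bot.trans bot_le))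

theorem disjoint_of_inf_sup_eq_sup_inf {a b x y L H : β} (hLH : Disjoint L H)
    (ha : a ≤ L ⊔ H) (hxa : Disjoint x a) (hyb : Disjoint y b)
    (hs : a ⊓ L ⊔ x = y ⊔ b ⊓ H) : Disjoint a b := by
  have hL : a ⊓ L ≤ y := calc
    a ⊓ L ≤ (a ⊓ L ⊔ x) ⊓ L := le_inf le_sup_left inf_le_right
    _ = (y ⊔ b ⊓ H) ⊓ L := by rw [hs]
    _ ≤ y := sup_inf_inf_le_of_disjoint hLH
  have hH : b ⊓ H ≤ x := calc
    b ⊓ H ≤ (y ⊔ b ⊓ H) ⊓ H := le_inf le_sup_right inf_le_right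
    _ = (x ⊔ a ⊓ L) ⊓ H := by rw [← hs, sup_comm]
    _ ≤ x := sup_inf_inf_le_of_disjoint hLH.symm
  rw [← inf_eq_left.mpr ha, inf_sup_left, disjoint_sup_left]
  refine ⟨hyb.mono_left hL, ?_⟩
  rw [disjoint_iff, inf_right_comm, inf_assoc]
  exact (hxa.mono_left hH).symm.eq_bot

end DistribLattice

theorem meet_in_the_middle_correct_general {α : Type*} [DecidableEq α]
    (U UL UH : Finset α) (hdisj : Disjoint UL UH) (hunion : UL ∪ UH = U)
    (A B : Finset (Finset α))
    (hA : ∀ a ∈ A, a ⊆ U) :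
    ((A.biUnion fun a =>
        (UH.powerset.filter fun x => x ∩ a = ∅).image fun x => (a ∩ UL) ∪ x) ∩
      (B.biUnion fun b =>
        (UL.powerset.filter fun y => y ∩ b = ∅).image fun y => y ∪ (b ∩ UH))).Nonempty ↔
      ∃ a ∈ A, ∃ b ∈ B, a ∩ b = ∅ := by
  simp only [← Finset.disjoint_iff_inter_eq_empty, Finset.Nonempty, Finset.mem_inter,
    Finset.mem_biUnion, Finset.mem_image, Finset.mem_filter, Finset.mem_powerset]
  constructor
  · rintro ⟨s, ⟨a, ha, x, ⟨-, hxa⟩, rfl⟩, ⟨b, hb, y, ⟨-, hyb⟩, hs⟩⟩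
    have haU : a ≤ UL ⊔ UH := (hA a ha).trans hunion.ge
    exact ⟨a, ha, b, hb, disjoint_of_inf_sup_eq_sup_inf hdisj haU hxa hyb hs.symm⟩
  · rintro ⟨a, ha, b, hb, hab⟩
    have hbH : Disjoint (b ∩ UH) a := hab.symm.mono_left Finset.inter_subset_left
    have haL : Disjoint (a ∩ UL) b := hab.mono_left Finset.inter_subset_left
    exact ⟨a ∩ UL ∪ b ∩ UH, ⟨a, ha, b ∩ UH, ⟨Finset.inter_subset_right, hbH⟩, rfl⟩,
      ⟨b, hb, a ∩ UL, ⟨Finset.inter_subset_right, haL⟩, rfl⟩⟩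

/-- **Correctness of the meet-in-the-middle algorithm for Orthogonal Vectors**
(Lemma 2.2): with `U = U_L ⊎ U_H`, the families
`S_A = {(a ∩ U_L) ∪ x : a ∈ A, x ⊆ U_H, x ∩ a = ∅}` and
`S_B = {y ∪ (b ∩ U_H) : b ∈ B, y ⊆ U_L, y ∩ b = ∅}`
intersect iff there is an orthogonal pair `a ∈ A`, `b ∈ B`. -/
theorem meet_in_the_middle_correct {α : Type*} [DecidableEq α]
    (U UL UH : Finset α) (hdisj : Disjoint UL UH) (hunion : UL ∪ UH = U)
    (A B : Finset (Finset α))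
    (hA : ∀ a ∈ A, a ⊆ U) (hB : ∀ b ∈ B, b ⊆ U) :
    ((A.biUnion fun a =>
        (UH.powerset.filter fun x => x ∩ a = ∅).image fun x => (a ∩ UL) ∪ x) ∩
      (B.biUnion fun b =>
        (UL.powerset.filter fun y => y ∩ b = ∅).image fun y => y ∪ (b ∩ UH))).Nonempty ↔
      ∃ a ∈ A, ∃ b ∈ B, a ∩ b = ∅ :=
  meet_in_the_middle_correct_general U UL UH hdisj hunion A B hA
end

section
/- For all real numbers α, β with 0 ≤ α ≤ β and α + β ≤ 1, it holds that (1−α) · h( (1−α−β) / (2(1−α)) ) − (1−α−β) ≤ log₂(5/4), where h is the binary entropy function (note that α ≤ 1/2, so 1−α > 0). -/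
/-!
Writing `p = (1-α-β)/(2(1-α))`, the exponent equals `(1-α)·(h(p) - 2p)`. By concavity of
`log` (Gibbs' inequality against the weights `(1/4, 1)`), `h(p) - 2p ≤ log₂(5/4)`, with equality
at `p = 1/5`; since `0 < 1-α ≤ 1` and `log₂(5/4) ≥ 0`, the factor `1-α` only helps.
-/

/-- Binary entropy in bits: `h(p) = −p·log₂ p − (1−p)·log₂(1−p)`. -/
noncomputable def binEnt (p : ℝ) : ℝ := Real.binEntropy p / Real.log 2

open Real

lemma binEntropy_sub_two_mul_mul_log_two_le {p : ℝ} (hp0 : 0 ≤ p) (hp1 : p ≤ 1) :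
    binEntropy p - 2 * p * log 2 ≤ log (5 / 4) := by
  have hlog : 0 ≤ log (5 / 4) := log_nonneg (by norm_num)
  rcases hp0.eq_or_lt with rfl | hp0
  · simpa using hlog
  rcases hp1.eq_or_lt with rfl | hp1
  · simpa using hlog.trans' (by linarith [log_pos one_lt_two])
  have hq0 : 0 < 1 - p := by linarith
  have hjensen :
      p * log (4 * p)⁻¹ + (1 - p) * log (1 - p)⁻¹ ≤
        log (p * (4 * p)⁻¹ + (1 - p) * (1 - p)⁻¹) :=
    strictConcaveOn_log_Ioi.concaveOn.2 (Set.mem_Ioi.2 (by positivity))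
      (Set.mem_Ioi.2 (by positivity)) hp0.le hq0.le (by ring)
  have hsum : p * (4 * p)⁻¹ + (1 - p) * (1 - p)⁻¹ = 5 / 4 := by field_simp; norm_num
  have hlog4 : log (4 * p)⁻¹ = log p⁻¹ - 2 * log 2 := by
    rw [mul_inv, log_mul (by norm_num) (by positivity), log_inv 4,
      show (4 : ℝ) = 2 ^ 2 by norm_num, log_pow]
    push_cast; ring
  rw [hsum, hlog4] at hjensen
  rw [binEntropy]
  linarith

lemma binEnt_sub_two_mul_le {p : ℝ} (hp0 : 0 ≤ p) (hp1 : p ≤ 1) :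
    binEnt p - 2 * p ≤ logb 2 (5 / 4) := by
  have hlog2 : 0 < log 2 := log_pos one_lt_two
  rw [binEnt, logb, le_div_iff₀ hlog2, sub_mul, div_mul_cancel₀ _ hlog2.ne']
  exact binEntropy_sub_two_mul_mul_log_two_le hp0 hp1

/-- **Final exponent bound in Theorem 1.2**: for `0 ≤ α ≤ β` with `α + β ≤ 1`,
`(1−α)·h((1−α−β)/(2(1−α))) − (1−α−β) ≤ log₂(5/4)`. -/
theorem exponent_bound (α β : ℝ) (h0 : 0 ≤ α) (hab : α ≤ β) (hsum : α + β ≤ 1) :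
    (1 - α) * binEnt ((1 - α - β) / (2 * (1 - α))) - (1 - α - β) ≤
      Real.logb 2 (5 / 4) := by
  set p := (1 - α - β) / (2 * (1 - α))
  have ha : 0 < 1 - α := by linarith
  have hp0 : 0 ≤ p := div_nonneg (by linarith) (by linarith)
  have hp1 : p ≤ 1 := (div_le_one (by linarith)).2 (by linarith)
  have hlog : 0 ≤ logb 2 (5 / 4) := logb_nonneg one_lt_two (by norm_num)
  calc (1 - α) * binEnt p - (1 - α - β) = (1 - α) * (binEnt p - 2 * p) := by
        simp only [p]; field_simp
    _ ≤ (1 - α) * logb 2 (5 / 4) :=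
        mul_le_mul_of_nonneg_left (binEnt_sub_two_mul_le hp0 hp1) ha.le
    _ ≤ logb 2 (5 / 4) := mul_le_of_le_one_left hlog (by linarith)
end

section
/- For every real β with 0 ≤ β ≤ 1, it holds that h((1+β)/2) + β − 1 ≤ log₂(5/4), where h is the binary entropy function. -/
namespace Real

lemma negMulLog_le_sub_sub_mul_log {p q : ℝ} (hp : 0 ≤ p) (hq : 0 < q) :
    negMulLog p ≤ q - p - p * log q := by
  have hpq : p = q * (p / q) := by field_simp
  calc negMulLog p = p / q * negMulLog q + q * negMulLog (p / q) := by
        rw [hpq, negMulLog_mul, ← hpq]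
    _ ≤ p / q * negMulLog q + q * (1 - p / q) := by
        gcongr; exact negMulLog_le_one_sub_self (div_nonneg hp hq.le)
    _ = q - p - p * log q := by rw [negMulLog]; field_simp; ring

lemma binEntropy_add_mul_log_add_mul_log_le {p a b : ℝ} (hp₀ : 0 ≤ p) (hp₁ : p ≤ 1)
    (ha : 0 < a) (hb : 0 < b) :
    binEntropy p + p * log a + (1 - p) * log b ≤ log (a + b) := by
  have hab : 0 < a + b := add_pos ha hb
  have h₁ := negMulLog_le_sub_sub_mul_log hp₀ (div_pos ha hab)
  have h₂ := negMulLog_le_sub_sub_mul_log (sub_nonneg.2 hp₁) (div_pos hb hab)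
  rw [log_div ha.ne' hab.ne'] at h₁
  rw [log_div hb.ne' hab.ne'] at h₂
  have hsum : a / (a + b) + b / (a + b) = 1 := by field_simp
  rw [binEntropy_eq_negMulLog_add_negMulLog_one_sub]
  linear_combination h₁ + h₂ + hsum

end Real

open Real

/-- **The key inequality of Theorem 1.2 (case α = 0)**: for `0 ≤ β ≤ 1`,
`h((1+β)/2) + β − 1 ≤ log₂(5/4)`. -/
theorem entropy_exponent_bound (β : ℝ) (h0 : 0 ≤ β) (h1 : β ≤ 1) :
    binEnt ((1 + β) / 2) + β - 1 ≤ Real.logb 2 (5 / 4) := by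
  set p := (1 + β) / 2 with hp
  have hlog4 : log 4 = 2 * log 2 := by
    rw [show (4 : ℝ) = 2 ^ 2 by norm_num, log_pow]; norm_num
  have hgibbs : binEntropy p + p * log 4 ≤ log 5 := by
    simpa [show (4 : ℝ) + 1 = 5 by norm_num] using binEntropy_add_mul_log_add_mul_log_le
      (a := 4) (b := 1) (by linarith : 0 ≤ p) (by linarith : p ≤ 1) (by norm_num) (by norm_num)
  have hlog2 : 0 < log 2 := log_pos one_lt_two
  calc binEnt p + β - 1 = (binEntropy p + p * log 4) / log 2 - 2 := by
        rw [binEnt, hlog4, hp]; field_simp; ring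
    _ ≤ log 5 / log 2 - 2 := by gcongr
    _ = logb 2 (5 / 4) := by
        rw [logb, log_div (by norm_num) (by norm_num), hlog4]; field_simp
end

section
/- Let ℓ ≥ 1 and m ≥ 0 be natural numbers, let u be a finite set with |u| = ℓ·m, let a ⊆ u, and let k_1, …, k_ℓ be natural numbers with k_1 + ⋯ + k_ℓ = |a| and k_i ≤ m for every i. Then the number of tuples (u_1, …, u_ℓ) of pairwise disjoint subsets of u with u_1 ∪ ⋯ ∪ u_ℓ = u, |u_i| = m for every i, and |u_i ∩ a| = k_i for every i equals multinomial(k_1,…,k_ℓ) · multinomial(m−k_1, …, m−k_ℓ), where multinomial(n_1,…,n_ℓ) := (n_1+⋯+n_ℓ)! / (n_1! ⋯ n_ℓ!). -/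
/-!
Splitting every block `u_i` into `(u_i ∩ a, u_i \ a)` is a bijection from the partitions counted
onto pairs of ordered partitions of `a` with block sizes `k_i` and of `u \ a` with block sizes
`m - k_i`. Ordered partitions of an `N`-set with block sizes `n_1, …, n_ℓ` summing to `N` number
`multinomial(n)`: there are `N choose n_1` choices for the first block, and the remaining blocks
form an ordered partition of its complement.
-/

open Finset Function

namespace Nat

theorem multinomial_univ_fin_succ {ℓ : ℕ} (n : Fin (ℓ + 1) → ℕ) :
    multinomial univ n = (∑ i, n i).choose (n 0) * multinomial univ (Fin.tail n) := by
  rw [Fin.sum_univ_succ, Fin.univ_succ, multinomial_cons, sum_map]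
  simp [multinomial, sum_map, prod_map, Fin.tail]

end Nat

theorem Fin.pairwise_disjoint_cons {β : Type*} [Lattice β] [OrderBot β] {ℓ : ℕ} (b : β)
    (g : Fin ℓ → β) :
    Pairwise (Disjoint on (Fin.cons b g : Fin (ℓ + 1) → β)) ↔
      (∀ j, Disjoint b (g j)) ∧ Pairwise (Disjoint on g) := by
  refine ⟨fun h => ⟨fun j => h (Fin.succ_ne_zero j).symm,
    fun i j hij => h (Fin.succ_injective _ |>.ne hij)⟩, ?_⟩
  rintro ⟨hb, hg⟩ i j hij
  cases i using Fin.cases <;> cases j using Fin.cases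
  · exact absurd rfl hij
  · exact hb _
  · exact (hb _).symm
  · exact hg (ne_of_apply_ne Fin.succ hij)

theorem Fin.sup_univ_cons {β : Type*} [SemilatticeSup β] [OrderBot β] {ℓ : ℕ} (b : β)
    (g : Fin ℓ → β) : univ.sup (Fin.cons b g : Fin (ℓ + 1) → β) = b ⊔ univ.sup g := by
  rw [Fin.univ_succ, sup_cons, sup_map]
  rfl

theorem disjoint_and_sup_eq_iff {β : Type*} [GeneralizedBooleanAlgebra β] {x y z : β} :
    Disjoint x z ∧ x ⊔ z = y ↔ x ≤ y ∧ z = y \ x := by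
  refine ⟨fun ⟨hd, hs⟩ => ⟨hs ▸ le_sup_left, (hd.sdiff_eq_of_sup_eq hs).symm⟩, ?_⟩
  rintro ⟨hxy, rfl⟩
  exact ⟨disjoint_sdiff_self_right, sup_sdiff_cancel_right hxy⟩

section OrderedPartitions

variable {α ι : Type*} [DecidableEq α] [Fintype ι] [DecidableEq ι]

def orderedPartitions (s : Finset α) (n : ι → ℕ) : Finset (ι → Finset α) :=
  (Fintype.piFinset fun _ => s.powerset).filter fun f =>
    (∀ i j, i ≠ j → f i ∩ f j = ∅) ∧ univ.sup f = s ∧ ∀ i, #(f i) = n i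

variable {s t a : Finset α} {n k : ι → ℕ} {f : ι → Finset α}

theorem mem_orderedPartitions :
    f ∈ orderedPartitions s n ↔
      Pairwise (Disjoint on f) ∧ univ.sup f = s ∧ ∀ i, #(f i) = n i := by
  simp only [orderedPartitions, mem_filter, Fintype.mem_piFinset, mem_powerset, Pairwise,
    Function.onFun, disjoint_iff_inter_eq_empty]
  refine ⟨fun h => h.2, fun h => ⟨fun i => ?_, h⟩⟩
  exact h.2.1 ▸ le_sup (mem_univ i)

theorem subset_of_mem_orderedPartitions (hf : f ∈ orderedPartitions s n) (i : ι) : f i ⊆ s :=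
  (mem_orderedPartitions.1 hf).2.1 ▸ le_sup (mem_univ i)

theorem cons_mem_orderedPartitions_iff {ℓ : ℕ} {n : Fin (ℓ + 1) → ℕ} {g : Fin ℓ → Finset α} :
    (Fin.cons t g : Fin (ℓ + 1) → Finset α) ∈ orderedPartitions s n ↔
      t ⊆ s ∧ #t = n 0 ∧ g ∈ orderedPartitions (s \ t) (Fin.tail n) := by
  simp only [mem_orderedPartitions, Fin.pairwise_disjoint_cons, Fin.sup_univ_cons,
    Fin.forall_fin_succ, Fin.cons_zero, Fin.cons_succ, Fin.tail]
  have hcompl := disjoint_and_sup_eq_iff (x := t) (y := s) (z := univ.sup g)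
  simp only [Finset.disjoint_sup_right, mem_univ, forall_const] at hcompl
  tauto

theorem card_orderedPartitions {ℓ : ℕ} (s : Finset α)
    (n : Fin ℓ → ℕ) (hn : ∑ i, n i = #s) :
    #(orderedPartitions s n) = Nat.multinomial univ n := by
  induction ℓ generalizing s with
  | zero =>
    obtain rfl : s = ∅ := card_eq_zero.1 (by simpa using hn.symm)
    simp [orderedPartitions, Nat.multinomial]
  | succ ℓ ih =>
    have hsplit : #(orderedPartitions s n) =
        #((s.powersetCard (n 0)).sigma fun t => orderedPartitions (s \ t) (Fin.tail n)) := by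
      refine card_nbij' (fun f => ⟨f 0, Fin.tail f⟩) (fun p => Fin.cons p.1 p.2) ?_ ?_ ?_ ?_
      · intro f hf
        rw [mem_coe, ← Fin.cons_self_tail f, cons_mem_orderedPartitions_iff] at hf
        simpa [mem_powersetCard, and_assoc] using hf
      · rintro ⟨t, g⟩ h
        simpa [mem_powersetCard, cons_mem_orderedPartitions_iff, and_assoc] using h
      · intro f _
        exact Fin.cons_self_tail f
      · rintro ⟨t, g⟩ _
        simp
    have hfiber : ∀ t ∈ s.powersetCard (n 0),
        #(orderedPartitions (s \ t) (Fin.tail n)) = Nat.multinomial univ (Fin.tail n) := by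
      intro t ht
      obtain ⟨hts, htn⟩ := mem_powersetCard.1 ht
      refine ih _ _ ?_
      rw [card_sdiff_of_subset hts, htn, ← hn, Fin.sum_univ_succ]
      simp [Fin.tail]
    rw [hsplit, card_sigma, sum_congr rfl hfiber, sum_const, card_powersetCard, smul_eq_mul,
      ← hn, Nat.multinomial_univ_fin_succ]

theorem inter_mem_orderedPartitions (hf : f ∈ orderedPartitions s n) (ha : a ⊆ s)
    (hk : ∀ i, #(f i ∩ a) = k i) : (fun i => f i ∩ a) ∈ orderedPartitions a k := by
  obtain ⟨hdisj, hsup, -⟩ := mem_orderedPartitions.1 hf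
  refine mem_orderedPartitions.2 ⟨fun i j hij => (hdisj hij).mono inf_le_left inf_le_left, ?_, hk⟩
  change (univ.sup fun i => f i ⊓ a) = a
  rw [← sup_inf_distrib_right, hsup, inf_eq_right.2 ha]

theorem sdiff_mem_orderedPartitions (hf : f ∈ orderedPartitions s n)
    (hk : ∀ i, #(f i ∩ a) = k i) :
    (fun i => f i \ a) ∈ orderedPartitions (s \ a) (fun i => n i - k i) := by
  obtain ⟨hdisj, hsup, hcard⟩ := mem_orderedPartitions.1 hf
  refine mem_orderedPartitions.2 ⟨fun i j hij => (hdisj hij).mono sdiff_le sdiff_le, ?_, ?_⟩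
  · rw [Finset.sup_sdiff_right, hsup]
  · intro i
    rw [card_sdiff, inter_comm, hcard, hk]

theorem union_mem_orderedPartitions {b : Finset α} {g h : ι → Finset α}
    (hg : g ∈ orderedPartitions a k) (hh : h ∈ orderedPartitions b n) (hab : Disjoint a b) :
    (fun i => g i ∪ h i) ∈ orderedPartitions (a ∪ b) (fun i => k i + n i) := by
  obtain ⟨hgdisj, hgsup, hgcard⟩ := mem_orderedPartitions.1 hg
  obtain ⟨hhdisj, hhsup, hhcard⟩ := mem_orderedPartitions.1 hh
  have hcross : ∀ i j, Disjoint (g i) (h j) := fun i j =>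
    hab.mono (subset_of_mem_orderedPartitions hg i) (subset_of_mem_orderedPartitions hh j)
  refine mem_orderedPartitions.2 ⟨fun i j hij => ?_, ?_, fun i => ?_⟩
  · simp only [Function.onFun, disjoint_union_left, disjoint_union_right]
    exact ⟨⟨hgdisj hij, (hcross j i).symm⟩, hcross i j, hhdisj hij⟩
  · rw [← hgsup, ← hhsup]
    exact sup_sup
  · rw [card_union_of_disjoint (hcross i i), hgcard, hhcard]

theorem card_filter_card_inter_orderedPartitions (ha : a ⊆ s) (hkn : ∀ i, k i ≤ n i) :
    #{f ∈ orderedPartitions s n | ∀ i, #(f i ∩ a) = k i} =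
      #(orderedPartitions a k) * #(orderedPartitions (s \ a) fun i => n i - k i) := by
  have hrecover : ∀ {g h : ι → Finset α}, g ∈ orderedPartitions a k →
      h ∈ orderedPartitions (s \ a) (fun i => n i - k i) →
        ∀ i, (g i ∪ h i) ∩ a = g i ∧ (g i ∪ h i) \ a = h i := by
    intro g h hg hh i
    have hga : g i ⊆ a := subset_of_mem_orderedPartitions hg i
    have hha : Disjoint (h i) a :=
      disjoint_of_subset_left (subset_of_mem_orderedPartitions hh i) sdiff_disjoint
    exact ⟨by rw [union_inter_distrib_right, inter_eq_left.2 hga,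
        disjoint_iff_inter_eq_empty.1 hha, union_empty],
      by rw [union_sdiff_distrib, sdiff_eq_empty_iff_subset.2 hga, hha.sdiff_eq_left, empty_union]⟩
  rw [← card_product]
  refine card_nbij' (fun f => (fun i => f i ∩ a, fun i => f i \ a)) (fun p i => p.1 i ∪ p.2 i)
    ?_ ?_ ?_ ?_
  · intro f hf
    obtain ⟨hf, hk⟩ := mem_filter.1 hf
    exact mem_product.2 ⟨inter_mem_orderedPartitions hf ha hk, sdiff_mem_orderedPartitions hf hk⟩
  · rintro ⟨g, h⟩ hp
    obtain ⟨hg, hh⟩ := mem_product.1 hp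
    have hmem := union_mem_orderedPartitions hg hh disjoint_sdiff
    simp only [union_sdiff_of_subset ha, Nat.add_sub_cancel' (hkn _)] at hmem
    refine mem_filter.2 ⟨hmem, fun i => ?_⟩
    rw [(hrecover hg hh i).1]
    exact (mem_orderedPartitions.1 hg).2.2 i
  · intro f _
    funext i
    exact sup_inf_sdiff (f i) a
  · rintro ⟨g, h⟩ hp
    obtain ⟨hg, hh⟩ := mem_product.1 hp
    ext1 <;> funext i
    exacts [(hrecover hg hh i).1, (hrecover hg hh i).2]

end OrderedPartitions

theorem count_balanced_partitions_general {α : Type*} [DecidableEq α]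
    (ℓ m : ℕ) (u a : Finset α) (hu : u.card = ℓ * m) (ha : a ⊆ u)
    (k : Fin ℓ → ℕ) (hsum : ∑ i, k i = a.card) (hk : ∀ i, k i ≤ m) :
    ((Fintype.piFinset fun _ : Fin ℓ => u.powerset).filter fun f =>
        (∀ i j, i ≠ j → f i ∩ f j = ∅) ∧ Finset.univ.sup f = u ∧
        (∀ i, (f i).card = m) ∧ (∀ i, (f i ∩ a).card = k i)).card =
      Nat.multinomial Finset.univ k * Nat.multinomial Finset.univ (fun i => m - k i) := by
  have hsum' : ∑ i, (m - k i) = #(u \ a) := by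
    have hsum_add : ∑ i, (m - k i) + ∑ i, k i = ℓ * m := by
      simp [← sum_add_distrib, Nat.sub_add_cancel (hk _)]
    rw [card_sdiff_of_subset ha, hu]
    omega
  rw [← card_orderedPartitions a k hsum, ← card_orderedPartitions (u \ a) _ hsum',
    ← card_filter_card_inter_orderedPartitions ha hk]
  congr 1
  ext f
  simp only [orderedPartitions, mem_filter, and_assoc]

/-- **Counting ordered equal-size partitions splitting a set prescribedly**
(core of Observation 3.1): with `|u| = ℓ·m`, `a ⊆ u`, and `k_1 + ⋯ + k_ℓ = |a|`,
`k_i ≤ m`, the number of ordered partitions `(u_1,…,u_ℓ)` of `u` into parts of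
size `m` with `|u_i ∩ a| = k_i` equals
`multinomial(k_1,…,k_ℓ) · multinomial(m−k_1,…,m−k_ℓ)`. -/
theorem count_balanced_partitions {α : Type*} [DecidableEq α]
    (ℓ m : ℕ) (hℓ : 1 ≤ ℓ) (u a : Finset α) (hu : u.card = ℓ * m) (ha : a ⊆ u)
    (k : Fin ℓ → ℕ) (hsum : ∑ i, k i = a.card) (hk : ∀ i, k i ≤ m) :
    ((Fintype.piFinset fun _ : Fin ℓ => u.powerset).filter fun f =>
        (∀ i j, i ≠ j → f i ∩ f j = ∅) ∧ Finset.univ.sup f = u ∧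
        (∀ i, (f i).card = m) ∧ (∀ i, (f i ∩ a).card = k i)).card =
      Nat.multinomial Finset.univ k * Nat.multinomial Finset.univ (fun i => m - k i) :=
  count_balanced_partitions_general ℓ m u a hu ha k hsum hk
end
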